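/- Let R = R₀ ⊕ R₁ be a strongly Z₂-graded commutative ring (i.e. R₁² = R₀). Then the Z₂-graded prime ideals of R are exactly the sets p + p·R₁ where p ranges over the prime ideals of R₀. -/

import Mathlib

/-- A `ℤ/2ℤ`-grading on a commutative ring `R`: additive subgroups `R0`, `R1` with
`R = R0 ⊕ R1` (internal direct sum) and `Rᵢ · Rⱼ ⊆ R_{i+j}`. -/
structure Z2Grading (R : Type*) [CommRing R] where
  R0 : AddSubgroup R
  R1 : AddSubgroup R
  one_mem : (1 : R) ∈ R0
  mul_mem_00 : ∀ {a b : R}, a ∈ R0 → b ∈ R0 → a * b ∈ R0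
  mul_mem_01 : ∀ {a b : R}, a ∈ R0 → b ∈ R1 → a * b ∈ R1
  mul_mem_11 : ∀ {a b : R}, a ∈ R1 → b ∈ R1 → a * b ∈ R0
  sup_eq_top : R0 ⊔ R1 = ⊤
  inf_eq_bot : R0 ⊓ R1 = ⊥

/-- The sum `S + T` of two subsets of `R`. -/
def setSum {R : Type*} [CommRing R] (S T : Set R) : Set R :=
  {z : R | ∃ a ∈ S, ∃ b ∈ T, z = a + b}

/-- The additive subgroup of `R` generated by the pairwise products of `S` and `T`
(i.e. the product `S·T` of an ideal/submodule pair). -/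
def mulSet {R : Type*} [CommRing R] (S T : Set R) : AddSubgroup R :=
  AddSubgroup.closure {x : R | ∃ a ∈ S, ∃ b ∈ T, x = a * b}

namespace Z2Grading

variable {R : Type*} [CommRing R] (G : Z2Grading R)

/-- The set of homogeneous elements of `R`, namely `R₀ ∪ R₁`. -/
def homogeneous : Set R := ↑G.R0 ∪ ↑G.R1

/-- `R₁²`, the ideal of `R₀` generated by the products of two elements of `R₁`. -/
def sq : AddSubgroup R := mulSet (↑G.R1) (↑G.R1)

/-- `R₁³ = R₁² · R₁`, an `R₀`-submodule of `R₁`. -/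
def cube : AddSubgroup R := mulSet (↑G.sq) (↑G.R1)

/-- `I` is an ideal of the subring `R₀` (viewed inside `R`). -/
def IsIdeal0 (I : AddSubgroup R) : Prop :=
  (I : Set R) ⊆ ↑G.R0 ∧ ∀ a ∈ G.R0, ∀ x ∈ I, a * x ∈ I

/-- `N` is an `R₀`-submodule of `R₁` (viewed inside `R`). -/
def IsSubmodule1 (N : AddSubgroup R) : Prop :=
  (N : Set R) ⊆ ↑G.R1 ∧ ∀ a ∈ G.R0, ∀ x ∈ N, a * x ∈ N

/-- The residual `(N :_{R₀} R₁) = {a ∈ R₀ : a·R₁ ⊆ N}`. -/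
def residual (N : AddSubgroup R) : AddSubgroup R where
  carrier := {a : R | a ∈ G.R0 ∧ ∀ r ∈ G.R1, a * r ∈ N}
  zero_mem' := ⟨G.R0.zero_mem, fun r _ => by simpa using N.zero_mem⟩
  add_mem' := by
    rintro a b ⟨ha0, ha⟩ ⟨hb0, hb⟩
    exact ⟨G.R0.add_mem ha0 hb0, fun r hr => by
      rw [add_mul]; exact N.add_mem (ha r hr) (hb r hr)⟩
  neg_mem' := by
    rintro a ⟨ha0, ha⟩
    exact ⟨G.R0.neg_mem ha0, fun r hr => by
      rw [neg_mul]; exact N.neg_mem (ha r hr)⟩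

/-- `J` is a `ℤ₂`-graded ideal of `R`: the homogeneous components of each of its
elements again belong to `J`, i.e. `J = (J ∩ R₀) ⊕ (J ∩ R₁)`. -/
def IsGradedIdeal (J : Ideal R) : Prop :=
  ∀ x ∈ J, ∃ a b : R, a ∈ G.R0 ∧ b ∈ G.R1 ∧ a ∈ J ∧ b ∈ J ∧ x = a + b

/-- `J` is a `ℤ₂`-graded prime ideal of `R`. -/
def IsGradedPrime (J : Ideal R) : Prop :=
  G.IsGradedIdeal J ∧ J ≠ ⊤ ∧
    ∀ r ∈ G.homogeneous, ∀ s ∈ G.homogeneous, r * s ∈ J → r ∈ J ∨ s ∈ J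

/-- `J` is a `ℤ₂`-graded maximal ideal of `R`. -/
def IsGradedMaximal (J : Ideal R) : Prop :=
  G.IsGradedIdeal J ∧ J ≠ ⊤ ∧
    ∀ J' : Ideal R, G.IsGradedIdeal J' → J ≤ J' → J' = J ∨ J' = ⊤

/-- `p` is a prime ideal of the subring `R₀`. -/
def IsPrime0 (p : AddSubgroup R) : Prop :=
  G.IsIdeal0 p ∧ (p : Set R) ≠ ↑G.R0 ∧
    ∀ a ∈ G.R0, ∀ b ∈ G.R0, a * b ∈ p → a ∈ p ∨ b ∈ p

/-- `p` is a maximal ideal of the subring `R₀`. -/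
def IsMaximal0 (p : AddSubgroup R) : Prop :=
  G.IsIdeal0 p ∧ (p : Set R) ≠ ↑G.R0 ∧
    ∀ I : AddSubgroup R, G.IsIdeal0 I → p ≤ I → (I : Set R) = ↑p ∨ (I : Set R) = ↑G.R0

/-- `N` is a prime `R₀`-submodule of `R₁`. -/
def IsPrimeSubmodule1 (N : AddSubgroup R) : Prop :=
  G.IsSubmodule1 N ∧ (N : Set R) ≠ ↑G.R1 ∧
    ∀ a ∈ G.R0, ∀ m ∈ G.R1, a * m ∈ N → a ∈ G.residual N ∨ m ∈ N

/-- `N` is a maximal (proper) `R₀`-submodule of `R₁`. -/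
def IsMaximalSubmodule1 (N : AddSubgroup R) : Prop :=
  G.IsSubmodule1 N ∧ (N : Set R) ≠ ↑G.R1 ∧
    ∀ N' : AddSubgroup R, G.IsSubmodule1 N' → N ≤ N' →
      (N' : Set R) = ↑N ∨ (N' : Set R) = ↑G.R1

/-- `R` is a `ℤ₂`-graded integral domain. -/
def IsGradedDomain : Prop :=
  (1 : R) ≠ 0 ∧
    ∀ r ∈ G.homogeneous, ∀ s ∈ G.homogeneous, r * s = 0 → r = 0 ∨ s = 0

/-- `R` is a `ℤ₂`-graded field. -/
def IsGradedField : Prop :=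
  (1 : R) ≠ 0 ∧ ∀ r ∈ G.homogeneous, r ≠ 0 → IsUnit r

/-- `R₀` as a subring of `R`. -/
def toSubring : Subring R where
  carrier := ↑G.R0
  one_mem' := G.one_mem
  mul_mem' := fun ha hb => G.mul_mem_00 ha hb
  zero_mem' := G.R0.zero_mem
  add_mem' := fun ha hb => G.R0.add_mem ha hb
  neg_mem' := fun ha => G.R0.neg_mem ha

/-- The Zariski topology on the homogeneous spectrum `Z₂Spec R`: closed sets are the
`V(I) = {P : I ⊆ P}` for `ℤ₂`-graded ideals `I`. -/
def gradedZariski : TopologicalSpace {Q : Ideal R // G.IsGradedPrime Q} :=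
  TopologicalSpace.generateFrom
    {U : Set {Q : Ideal R // G.IsGradedPrime Q} |
      ∃ I : Ideal R, G.IsGradedIdeal I ∧ U = {P | ¬ I ≤ P.1}}

end Z2Grading

/-!
A graded ideal `Q` is determined by its degree-zero part `p = Q ∩ R₀`: since `1 ∈ R₁²`, an odd element
`b` lies in `Q` as soon as `R₁ b ⊆ p`, so `Q ∩ R₁ = p R₁`. Likewise, multiplying by a suitable odd
element moves any homogeneous element outside `Q` into `R₀ \ Q`, so homogeneous primality of `Q` reduces
to primality of `p` in `R₀`.
-/

namespace Z2Grading

variable {R : Type*} [CommRing R] (G : Z2Grading R)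

def degZero (Q : Ideal R) : AddSubgroup R := Q.toAddSubgroup ⊓ G.R0

lemma mem_degZero {Q : Ideal R} {x : R} : x ∈ G.degZero Q ↔ x ∈ Q ∧ x ∈ G.R0 :=
  AddSubgroup.mem_inf

lemma eq_zero_of_mem_R0_of_mem_R1 {x : R} (h0 : x ∈ G.R0) (h1 : x ∈ G.R1) : x = 0 := by
  have hx : x ∈ G.R0 ⊓ G.R1 := ⟨h0, h1⟩
  rwa [G.inf_eq_bot, AddSubgroup.mem_bot] at hx

lemma mulSet_le_R1 {p : AddSubgroup R} (hp : p ≤ G.R0) : mulSet (p : Set R) G.R1 ≤ G.R1 := by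
  refine (AddSubgroup.closure_le G.R1).2 ?_
  rintro _ ⟨a, ha, m, hm, rfl⟩
  exact G.mul_mem_01 (hp ha) hm

lemma one_mem_sq (hstr : (G.sq : Set R) = G.R0) : (1 : R) ∈ G.sq := by
  rw [← SetLike.mem_coe, hstr]
  exact G.one_mem

lemma mem_of_forall_mul_mul_mem (hstr : (G.sq : Set R) = G.R0) {M : AddSubgroup R} {s : R}
    (h : ∀ x ∈ G.R1, ∀ y ∈ G.R1, x * y * s ∈ M) : s ∈ M := by
  have hsq : ∀ c ∈ G.sq, c * s ∈ M := by
    intro c hc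
    induction hc using AddSubgroup.closure_induction with
    | mem _ hz =>
      obtain ⟨x, hx, y, hy, rfl⟩ := hz
      exact h x hx y hy
    | zero => rw [zero_mul]; exact M.zero_mem
    | add a b _ _ ha hb => rw [add_mul]; exact M.add_mem ha hb
    | neg a _ ha => rw [neg_mul]; exact M.neg_mem ha
  simpa using hsq 1 (G.one_mem_sq hstr)

lemma exists_mul_mem_R0_not_mem (hstr : (G.sq : Set R) = G.R0) (I : Ideal R) {r : R}
    (hr : r ∈ G.homogeneous) (hrI : r ∉ I) : ∃ t, t * r ∈ G.R0 ∧ t * r ∉ I := by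
  rcases hr with hr0 | hr1
  · exact ⟨1, by simpa using hr0, by simpa using hrI⟩
  · by_contra! h
    refine hrI (G.mem_of_forall_mul_mul_mem hstr (M := I.toAddSubgroup) fun x _ y hy => ?_)
    rw [mul_assoc]
    exact I.mul_mem_left x (h y (G.mul_mem_11 hy hr1))

lemma isIdeal0_degZero (Q : Ideal R) : G.IsIdeal0 (G.degZero Q) := by
  refine ⟨fun x hx => ((G.mem_degZero).1 hx).2, fun a ha x hx => ?_⟩
  obtain ⟨hxQ, hx0⟩ := (G.mem_degZero).1 hx
  exact (G.mem_degZero).2 ⟨Q.mul_mem_left a hxQ, G.mul_mem_00 ha hx0⟩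

lemma isGradedIdeal_of_coe_eq_setSum {Q : Ideal R} {A B : AddSubgroup R}
    (hA : A ≤ G.R0) (hB : B ≤ G.R1) (hQ : (Q : Set R) = setSum A B) : G.IsGradedIdeal Q := by
  have hAQ : ∀ a ∈ A, a ∈ Q := fun a ha => by
    rw [← SetLike.mem_coe, hQ]
    exact ⟨a, ha, 0, B.zero_mem, (add_zero a).symm⟩
  have hBQ : ∀ b ∈ B, b ∈ Q := fun b hb => by
    rw [← SetLike.mem_coe, hQ]
    exact ⟨0, A.zero_mem, b, hb, (zero_add b).symm⟩
  intro x hx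
  rw [← SetLike.mem_coe, hQ] at hx
  obtain ⟨a, ha, b, hb, rfl⟩ := hx
  exact ⟨a, b, hA ha, hB hb, hAQ a ha, hBQ b hb, rfl⟩

lemma degZero_eq_of_coe_eq_setSum {Q : Ideal R} {A B : AddSubgroup R}
    (hA : A ≤ G.R0) (hB : B ≤ G.R1) (hQ : (Q : Set R) = setSum A B) : G.degZero Q = A := by
  ext x
  rw [G.mem_degZero, ← SetLike.mem_coe, hQ]
  constructor
  · rintro ⟨⟨a, ha, b, hb, rfl⟩, hx0⟩
    have hb0 : b = 0 :=
      G.eq_zero_of_mem_R0_of_mem_R1 (by simpa using G.R0.sub_mem hx0 (hA ha)) (hB hb)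
    simpa [hb0] using ha
  · intro hx
    exact ⟨⟨x, hx, 0, B.zero_mem, (add_zero x).symm⟩, hA hx⟩

lemma coe_eq_setSum_degZero (hstr : (G.sq : Set R) = G.R0) {Q : Ideal R}
    (hQ : G.IsGradedIdeal Q) :
    (Q : Set R) = setSum (G.degZero Q) (mulSet (G.degZero Q : Set R) G.R1) := by
  ext x
  constructor
  · intro hx
    obtain ⟨a, b, ha0, hb1, haQ, hbQ, rfl⟩ := hQ x hx
    refine ⟨a, (G.mem_degZero).2 ⟨haQ, ha0⟩, b, ?_, rfl⟩
    refine G.mem_of_forall_mul_mul_mem hstr fun y hy z hz => AddSubgroup.subset_closure ?_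
    exact ⟨z * b, (G.mem_degZero).2 ⟨Q.mul_mem_left z hbQ, G.mul_mem_11 hz hb1⟩, y, hy, by ring⟩
  · rintro ⟨a, ha, b, hb, rfl⟩
    have hpR1 : mulSet (G.degZero Q : Set R) G.R1 ≤ Q.toAddSubgroup := by
      refine (AddSubgroup.closure_le _).2 ?_
      rintro _ ⟨c, hc, m, -, rfl⟩
      exact Q.mul_mem_right m ((G.mem_degZero).1 hc).1
    exact Q.add_mem ((G.mem_degZero).1 ha).1 (hpR1 hb)

lemma homogeneous_prime_of_R0_prime (hstr : (G.sq : Set R) = G.R0) {Q : Ideal R}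
    (hQ : ∀ a ∈ G.R0, ∀ b ∈ G.R0, a * b ∈ Q → a ∈ Q ∨ b ∈ Q) :
    ∀ r ∈ G.homogeneous, ∀ s ∈ G.homogeneous, r * s ∈ Q → r ∈ Q ∨ s ∈ Q := by
  intro r hr s hs hrs
  by_contra! h
  obtain ⟨t, htr0, htrQ⟩ := G.exists_mul_mem_R0_not_mem hstr Q hr h.1
  obtain ⟨u, hus0, husQ⟩ := G.exists_mul_mem_R0_not_mem hstr Q hs h.2
  have hprod : t * r * (u * s) ∈ Q := by
    rw [show t * r * (u * s) = t * u * (r * s) by ring]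
    exact Q.mul_mem_left _ hrs
  rcases hQ _ htr0 _ hus0 hprod with h' | h'
  exacts [htrQ h', husQ h']

lemma isGradedPrime_iff_isPrime0_degZero (hstr : (G.sq : Set R) = G.R0) {Q : Ideal R}
    (hQ : G.IsGradedIdeal Q) : G.IsGradedPrime Q ↔ G.IsPrime0 (G.degZero Q) := by
  have hone : (1 : R) ∈ G.degZero Q ↔ Q = ⊤ := by
    rw [G.mem_degZero, Ideal.eq_top_iff_one]
    exact and_iff_left G.one_mem
  constructor
  · rintro ⟨-, hne, hprime⟩
    refine ⟨G.isIdeal0_degZero Q, fun h => hne (hone.1 ?_), fun a ha b hb hab => ?_⟩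
    · rw [← SetLike.mem_coe, h]
      exact G.one_mem
    · rcases hprime a (Or.inl ha) b (Or.inl hb) ((G.mem_degZero).1 hab).1 with h | h
      · exact Or.inl ((G.mem_degZero).2 ⟨h, ha⟩)
      · exact Or.inr ((G.mem_degZero).2 ⟨h, hb⟩)
  · rintro ⟨⟨hsub, hmul⟩, hne, hprime⟩
    refine ⟨hQ, fun h => hne ?_, G.homogeneous_prime_of_R0_prime hstr fun a ha b hb hab => ?_⟩
    · refine Set.Subset.antisymm hsub fun a ha => ?_
      simpa using hmul a ha 1 (hone.2 h)
    · rcases hprime a ha b hb ((G.mem_degZero).2 ⟨hab, G.mul_mem_00 ha hb⟩) with h | h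
      exacts [Or.inl ((G.mem_degZero).1 h).1, Or.inr ((G.mem_degZero).1 h).1]

end Z2Grading

/-- if `R` is strongly `ℤ₂`-graded (`R₁² = R₀`) then the `ℤ₂`-graded prime
ideals of `R` are exactly the sets `p + p·R₁` with `p` a prime ideal of `R₀`. -/
theorem graded_primes_of_strongly_graded {R : Type*} [CommRing R] (G : Z2Grading R)
    (hstr : (G.sq : Set R) = ↑G.R0) (Q : Ideal R) :
    G.IsGradedPrime Q ↔
      ∃ p : AddSubgroup R, G.IsPrime0 p ∧
        (Q : Set R) = setSum ↑p (mulSet (p : Set R) (G.R1 : Set R) : Set R) := by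
  constructor
  · intro hQ
    exact ⟨G.degZero Q, (G.isGradedPrime_iff_isPrime0_degZero hstr hQ.1).1 hQ,
      G.coe_eq_setSum_degZero hstr hQ.1⟩
  · rintro ⟨p, hp, hQ⟩
    have hpR1 := G.mulSet_le_R1 hp.1.1
    rw [G.isGradedPrime_iff_isPrime0_degZero hstr (G.isGradedIdeal_of_coe_eq_setSum hp.1.1 hpR1 hQ),
      G.degZero_eq_of_coe_eq_setSum hp.1.1 hpR1 hQ]
    exact hp
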